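/- Let L_τ and ℒ_τ be symmetric N×N matrices with ℒ_τ of rank K having smallest nonzero eigenvalue λ_K > 0, and suppose ‖L_τ − ℒ_τ‖ ≤ λ_K/8 (spectral norm). Let X_τ ∈ R^{N×K} contain orthonormal eigenvectors of the top-K eigenvalues of L_τ, and 𝒳_τ ∈ R^{N×K} orthonormal eigenvectors of the K positive eigenvalues of ℒ_τ. Then there exists an orthogonal matrix 𝒪 ∈ R^{K×K} such that ‖X_τ − 𝒳_τ 𝒪‖_F ≤ (8√(2K)/λ_K)‖L_τ − ℒ_τ‖. -/

import Mathlib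

/-!
Weyl's inequality, proved by a dimension count inside the range of `𝒳τ`, puts every `W s` above
`λ_K - ε`, where `ε = ‖Lτ - ℒτ‖`. Since `ℒτ` has rank `K`, the projector `P = 𝒳τ 𝒳τᵀ` fixes
`ℒτ`, so `(1 - P) Xτ diag W = (1 - P) (Lτ - ℒτ) Xτ`, which gives the `sin Θ` bound
`‖(1 - P) Xτ c‖ ≤ ε / (λ_K - ε) ‖c‖`. For `𝒪` take the polar factor `S (SᵀS)^(-1/2)` of
`S = 𝒳τᵀ Xτ`: then `‖Xτ - 𝒳τ 𝒪‖_F² = 2K - 2 tr (SᵀS)^(1/2) ≤ 2 (K - tr SᵀS) = 2 ‖(1 - P) Xτ‖_F²`,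
because `SᵀS ≤ 1`; summing the `sin Θ` bound over a basis and using `λ_K - ε ≥ λ_K / 8` finishes.
-/

open Matrix

noncomputable def specNorm {N : ℕ} (A : Matrix (Fin N) (Fin N) ℝ) : ℝ :=
  ‖Matrix.toEuclideanCLM (𝕜 := ℝ) A‖

noncomputable def frobNorm {m n : ℕ} (A : Matrix (Fin m) (Fin n) ℝ) : ℝ :=
  Real.sqrt (∑ i, ∑ j, (A i j) ^ 2)

namespace Matrix

variable {R n k : Type*} [Fintype n] [Fintype k]

lemma dotProduct_self_nonneg [Ring R] [LinearOrder R] [IsStrictOrderedRing R] (v : n → R) :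
    0 ≤ v ⬝ᵥ v :=
  Finset.sum_nonneg fun i _ => mul_self_nonneg (v i)

lemma dotProduct_self_pos [Ring R] [LinearOrder R] [IsStrictOrderedRing R] {v : n → R}
    (hv : v ≠ 0) : 0 < v ⬝ᵥ v :=
  (dotProduct_self_nonneg v).lt_of_ne' (mt dotProduct_self_eq_zero.mp hv)

lemma dotProduct_self_eq_norm_toLp_sq (x : n → ℝ) : x ⬝ᵥ x = ‖WithLp.toLp 2 x‖ ^ 2 := by
  rw [← real_inner_self_eq_norm_sq, EuclideanSpace.inner_toLp_toLp, star_trivial]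

theorem exists_ne_zero_mulVec_apply_eq_zero [Field R] [DecidableEq k] (A : Matrix k k R) (s : k) :
    ∃ a ≠ 0, ∀ t ≠ s, (A *ᵥ a) t = 0 := by
  let f := LinearMap.funLeft R R (Subtype.val : {t // t ≠ s} → k) ∘ₗ A.mulVecLin
  have hlt : Module.finrank R ({t // t ≠ s} → R) < Module.finrank R (k → R) := by
    simp [Fintype.card_subtype_compl, Fintype.card_pos_iff.mpr ⟨s⟩]
  obtain ⟨a, ha, ha0⟩ :=
    Submodule.exists_mem_ne_zero_of_ne_bot (LinearMap.ker_ne_bot_of_finrank_lt (f := f) hlt)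
  exact ⟨a, ha0, fun t ht => congrFun (LinearMap.mem_ker.mp ha) ⟨t, ht⟩⟩

lemma dotProduct_mulVec_smul_add_le {L : Matrix n n ℝ} (hL : L.IsSymm) {x w : n → ℝ} {μ : ℝ}
    (hx : L *ᵥ x = μ • x) (hxw : x ⬝ᵥ w = 0) (hw : w ⬝ᵥ (L *ᵥ w) ≤ μ * (w ⬝ᵥ w)) (α : ℝ) :
    (α • x + w) ⬝ᵥ (L *ᵥ (α • x + w)) ≤ μ * ((α • x + w) ⬝ᵥ (α • x + w)) := by
  have hxLw : x ⬝ᵥ (L *ᵥ w) = 0 := by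
    rw [dotProduct_mulVec, ← mulVec_transpose, hL.eq, hx, smul_dotProduct, hxw, smul_zero]
  have hwx : w ⬝ᵥ x = 0 := by rw [dotProduct_comm, hxw]
  simp only [mulVec_add, mulVec_smul, hx, dotProduct_add, add_dotProduct, dotProduct_smul,
    smul_dotProduct, hxLw, hxw, hwx, smul_eq_mul]
  nlinarith

variable [DecidableEq k]

lemma mulVec_dotProduct_mulVec_of_transpose_mul_self {A : Matrix n k ℝ} (hA : Aᵀ * A = 1)
    (a b : k → ℝ) : (A *ᵥ a) ⬝ᵥ (A *ᵥ b) = a ⬝ᵥ b := by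
  rw [dotProduct_mulVec, ← mulVec_transpose, mulVec_mulVec, hA, one_mulVec]

lemma dotProduct_sub_mulVec_transpose_mulVec {A : Matrix n k ℝ} (hA : Aᵀ * A = 1) (y : n → ℝ) :
    (y - A *ᵥ (Aᵀ *ᵥ y)) ⬝ᵥ (y - A *ᵥ (Aᵀ *ᵥ y)) = y ⬝ᵥ y - (Aᵀ *ᵥ y) ⬝ᵥ (Aᵀ *ᵥ y) := by
  have hcross : (A *ᵥ (Aᵀ *ᵥ y)) ⬝ᵥ y = (Aᵀ *ᵥ y) ⬝ᵥ (Aᵀ *ᵥ y) := by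
    rw [dotProduct_comm, dotProduct_mulVec, ← mulVec_transpose]
  rw [sub_dotProduct, dotProduct_sub, dotProduct_sub, dotProduct_comm y (A *ᵥ _), hcross,
    mulVec_dotProduct_mulVec_of_transpose_mul_self hA]
  ring

lemma dotProduct_self_transpose_mul_mulVec_add {X 𝒳 : Matrix n k ℝ} (hX : Xᵀ * X = 1)
    (h𝒳 : 𝒳ᵀ * 𝒳 = 1) (c : k → ℝ) :
    ((𝒳ᵀ * X) *ᵥ c) ⬝ᵥ ((𝒳ᵀ * X) *ᵥ c)
      + ((X - 𝒳 * (𝒳ᵀ * X)) *ᵥ c) ⬝ᵥ ((X - 𝒳 * (𝒳ᵀ * X)) *ᵥ c) = c ⬝ᵥ c := by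
  have h := dotProduct_sub_mulVec_transpose_mulVec h𝒳 (X *ᵥ c)
  rw [mulVec_dotProduct_mulVec_of_transpose_mul_self hX] at h
  simp only [sub_mulVec, ← mulVec_mulVec] at h ⊢
  linarith

theorem injective_mulVec_transpose_mul {X 𝒳 : Matrix n k ℝ} (hX : Xᵀ * X = 1)
    (h𝒳 : 𝒳ᵀ * 𝒳 = 1) {C : ℝ} (hC : C < 1)
    (hM : ∀ c, ((X - 𝒳 * (𝒳ᵀ * X)) *ᵥ c) ⬝ᵥ ((X - 𝒳 * (𝒳ᵀ * X)) *ᵥ c) ≤ C * (c ⬝ᵥ c)) :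
    Function.Injective (𝒳ᵀ * X).mulVec := by
  refine (injective_iff_map_eq_zero (𝒳ᵀ * X).mulVecLin).mpr fun c hc => ?_
  rw [mulVecLin_apply] at hc
  have h := dotProduct_self_transpose_mul_mulVec_add hX h𝒳 c
  rw [hc, zero_dotProduct, zero_add] at h
  have := hM c
  have := dotProduct_self_nonneg c
  exact dotProduct_self_eq_zero.mp (by nlinarith)

theorem dotProduct_mulVec_le_of_vecMul_apply_eq_zero {L : Matrix n n ℝ} (hL : L.IsSymm)
    {X : Matrix n k ℝ} (hX : Xᵀ * X = 1) {W : k → ℝ} (hXeig : L * X = X * diagonal W)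
    (htop : ∀ v : n → ℝ, (∀ s, (∑ i, v i * X i s) = 0) →
      v ⬝ᵥ L *ᵥ v ≤ (⨅ s, W s) * (v ⬝ᵥ v))
    {s : k} {v : n → ℝ} (hv : ∀ t ≠ s, (v ᵥ* X) t = 0) :
    v ⬝ᵥ L *ᵥ v ≤ W s * (v ⬝ᵥ v) := by
  set x := X *ᵥ Pi.single s 1 with hx_def
  set α := (v ᵥ* X) s
  set w := v - α • x
  have hx : L *ᵥ x = W s • x := by
    rw [mulVec_mulVec, hXeig, ← mulVec_mulVec, diagonal_mulVec_single, ← mulVec_smul,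
      ← Pi.single_smul', smul_eq_mul]
  have hxX : x ᵥ* X = Pi.single s 1 := by
    rw [hx_def, ← vecMul_transpose, vecMul_vecMul, hX, vecMul_one]
  have hw : w ᵥ* X = 0 := by
    funext t
    rcases eq_or_ne t s with rfl | hts
    · simp [w, sub_vecMul, smul_vecMul, hxX, α]
    · simp [w, sub_vecMul, smul_vecMul, hxX, hv t hts, hts]
  have hxw : x ⬝ᵥ w = 0 := by rw [dotProduct_comm, dotProduct_mulVec, hw, zero_dotProduct]
  have hwL : w ⬝ᵥ L *ᵥ w ≤ W s * (w ⬝ᵥ w) :=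
    (htop w fun t => congrFun hw t).trans <| mul_le_mul_of_nonneg_right
      (ciInf_le (Set.finite_range W).bddBelow s) (dotProduct_self_nonneg w)
  have hvw : v = α • x + w := by simp [w]
  rw [hvw]
  exact dotProduct_mulVec_smul_add_le hL hx hxw hwL α

lemma mul_dotProduct_self_le_dotProduct_mulVec {ℒ : Matrix n n ℝ} {𝒳 : Matrix n k ℝ}
    (h𝒳 : 𝒳ᵀ * 𝒳 = 1) {Λ : k → ℝ} (h𝒳eig : ℒ * 𝒳 = 𝒳 * diagonal Λ) {lam : ℝ}
    (hΛ : ∀ t, lam ≤ Λ t) (a : k → ℝ) :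
    lam * ((𝒳 *ᵥ a) ⬝ᵥ (𝒳 *ᵥ a)) ≤ (𝒳 *ᵥ a) ⬝ᵥ (ℒ *ᵥ (𝒳 *ᵥ a)) := by
  rw [mulVec_mulVec, h𝒳eig, ← mulVec_mulVec, mulVec_dotProduct_mulVec_of_transpose_mul_self h𝒳,
    mulVec_dotProduct_mulVec_of_transpose_mul_self h𝒳, dotProduct, dotProduct, Finset.mul_sum]
  refine Finset.sum_le_sum fun t _ => ?_
  rw [mulVec_diagonal]
  nlinarith [hΛ t, mul_self_nonneg (a t)]

theorem sub_le_of_abs_dotProduct_sub_mulVec_le {L ℒ : Matrix n n ℝ} (hL : L.IsSymm)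
    {lam ε : ℝ} {𝒳 : Matrix n k ℝ} (h𝒳 : 𝒳ᵀ * 𝒳 = 1) {Λ : k → ℝ}
    (hΛ : ∀ t, lam ≤ Λ t) (h𝒳eig : ℒ * 𝒳 = 𝒳 * diagonal Λ)
    {X : Matrix n k ℝ} (hX : Xᵀ * X = 1) {W : k → ℝ} (hXeig : L * X = X * diagonal W)
    (htop : ∀ v : n → ℝ, (∀ s, (∑ i, v i * X i s) = 0) →
      v ⬝ᵥ L *ᵥ v ≤ (⨅ s, W s) * (v ⬝ᵥ v))
    (hε : ∀ v, |v ⬝ᵥ ((L - ℒ) *ᵥ v)| ≤ ε * (v ⬝ᵥ v)) (s : k) :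
    lam - ε ≤ W s := by
  obtain ⟨a, ha0, ha⟩ := exists_ne_zero_mulVec_apply_eq_zero (Xᵀ * 𝒳) s
  set v := 𝒳 *ᵥ a
  have hv : ∀ t ≠ s, (v ᵥ* X) t = 0 := by
    simpa [v, ← mulVec_transpose, mulVec_mulVec] using ha
  have hvpos : 0 < v ⬝ᵥ v := by
    rw [mulVec_dotProduct_mulVec_of_transpose_mul_self h𝒳]
    exact dotProduct_self_pos ha0
  have hupper := dotProduct_mulVec_le_of_vecMul_apply_eq_zero hL hX hXeig htop hv
  have hlower := mul_dotProduct_self_le_dotProduct_mulVec h𝒳 h𝒳eig hΛ a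
  have hpert := neg_le_of_abs_le (hε v)
  rw [sub_mulVec, dotProduct_sub] at hpert
  nlinarith

theorem mul_transpose_mul_eq_self_of_rank_eq {ℒ : Matrix n n ℝ} {𝒳 : Matrix n k ℝ}
    (h𝒳 : 𝒳ᵀ * 𝒳 = 1) {Λ : k → ℝ} (hΛ : ∀ t, Λ t ≠ 0) (h𝒳eig : ℒ * 𝒳 = 𝒳 * diagonal Λ)
    (hrank : ℒ.rank = Fintype.card k) : 𝒳 * 𝒳ᵀ * ℒ = ℒ := by
  have hfactor : ℒ * (𝒳 * diagonal fun t => (Λ t)⁻¹) = 𝒳 := by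
    rw [← Matrix.mul_assoc, h𝒳eig, Matrix.mul_assoc, diagonal_mul_diagonal]
    simp [hΛ]
  have hle : LinearMap.range 𝒳.mulVecLin ≤ LinearMap.range ℒ.mulVecLin := by
    rw [← hfactor, mulVecLin_mul]
    exact LinearMap.range_comp_le_range _ _
  have hrank𝒳 : 𝒳.rank = Fintype.card k := by
    rw [← rank_transpose_mul_self, h𝒳, rank_one]
  have hrange : LinearMap.range ℒ.mulVecLin = LinearMap.range 𝒳.mulVecLin :=
    (Submodule.eq_of_le_of_finrank_le hle (by rw [← rank, ← rank, hrank, hrank𝒳])).symm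
  refine ext_iff_mulVec.mpr fun u => ?_
  obtain ⟨a, ha⟩ : ℒ *ᵥ u ∈ LinearMap.range 𝒳.mulVecLin := hrange ▸ ⟨u, rfl⟩
  rw [mulVecLin_apply] at ha
  rw [← mulVec_mulVec, ← ha, mulVec_mulVec, Matrix.mul_assoc, h𝒳, Matrix.mul_one]

theorem mulVec_sub_mul_transpose_mul_le {L ℒ : Matrix n n ℝ} {X 𝒳 : Matrix n k ℝ}
    (hX : Xᵀ * X = 1) (h𝒳 : 𝒳ᵀ * 𝒳 = 1) (hPℒ : 𝒳 * 𝒳ᵀ * ℒ = ℒ) {W : k → ℝ}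
    (hXeig : L * X = X * diagonal W) {δ ε : ℝ} (hδ : 0 < δ) (hW : ∀ t, δ ≤ W t)
    (hε : ∀ y, ((L - ℒ) *ᵥ y) ⬝ᵥ ((L - ℒ) *ᵥ y) ≤ ε ^ 2 * (y ⬝ᵥ y)) (c : k → ℝ) :
    ((X - 𝒳 * (𝒳ᵀ * X)) *ᵥ c) ⬝ᵥ ((X - 𝒳 * (𝒳ᵀ * X)) *ᵥ c) ≤ (ε / δ) ^ 2 * (c ⬝ᵥ c) := by
  set u : k → ℝ := fun t => c t / W t
  have hc : c = diagonal W *ᵥ u := by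
    funext t
    simp [mulVec_diagonal, u, mul_div_cancel₀ _ (hδ.trans_le (hW t)).ne']
  have hu : δ ^ 2 * (u ⬝ᵥ u) ≤ c ⬝ᵥ c := by
    rw [hc, dotProduct, dotProduct, Finset.mul_sum]
    refine Finset.sum_le_sum fun t _ => ?_
    rw [mulVec_diagonal]
    nlinarith [mul_le_mul (hW t) (hW t) hδ.le (hδ.le.trans (hW t)), mul_self_nonneg (u t)]
  have hMW : (X - 𝒳 * (𝒳ᵀ * X)) * diagonal W
      = (L - ℒ) * X - 𝒳 * (𝒳ᵀ * ((L - ℒ) * X)) := by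
    simp only [Matrix.sub_mul, Matrix.mul_sub, ← Matrix.mul_assoc, hPℒ]
    rw [Matrix.mul_assoc (𝒳 * 𝒳ᵀ) X, ← hXeig, ← Matrix.mul_assoc]
    abel
  set y := (L - ℒ) *ᵥ (X *ᵥ u)
  have hMc : (X - 𝒳 * (𝒳ᵀ * X)) *ᵥ c = y - 𝒳 *ᵥ (𝒳ᵀ *ᵥ y) := by
    rw [hc, mulVec_mulVec, hMW]
    simp only [sub_mulVec, mulVec_mulVec, y]
  rw [hMc, dotProduct_sub_mulVec_transpose_mulVec h𝒳]
  calc y ⬝ᵥ y - (𝒳ᵀ *ᵥ y) ⬝ᵥ (𝒳ᵀ *ᵥ y) ≤ y ⬝ᵥ y := sub_le_self _ (dotProduct_self_nonneg _)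
    _ ≤ ε ^ 2 * (u ⬝ᵥ u) := by
        simpa only [mulVec_dotProduct_mulVec_of_transpose_mul_self hX] using hε (X *ᵥ u)
    _ ≤ (ε / δ) ^ 2 * (c ⬝ᵥ c) := by
        rw [div_pow, div_mul_eq_mul_div, le_div_iff₀ (by positivity)]
        nlinarith [sq_nonneg ε]

lemma trace_transpose_mul_self_le (A : Matrix n k ℝ) {C : ℝ}
    (hA : ∀ c, (A *ᵥ c) ⬝ᵥ (A *ᵥ c) ≤ C * (c ⬝ᵥ c)) :
    (Aᵀ * A).trace ≤ Fintype.card k * C := by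
  have htrace : (Aᵀ * A).trace = ∑ j, (A *ᵥ Pi.single j 1) ⬝ᵥ (A *ᵥ Pi.single j 1) := by
    simp [trace, mul_apply, dotProduct]
  rw [htrace, ← nsmul_eq_mul, ← Finset.card_univ, ← Finset.sum_const]
  refine Finset.sum_le_sum fun j _ => (hA _).trans_eq ?_
  simp

lemma trace_transpose_mul_self_sub_mul {X 𝒳 : Matrix n k ℝ} (hX : Xᵀ * X = 1)
    (h𝒳 : 𝒳ᵀ * 𝒳 = 1) (B : Matrix k k ℝ) :
    ((X - 𝒳 * B)ᵀ * (X - 𝒳 * B)).trace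
      = Fintype.card k - 2 * (Bᵀ * (𝒳ᵀ * X)).trace + (Bᵀ * B).trace := by
  have hcross : (Xᵀ * (𝒳 * B)).trace = (Bᵀ * (𝒳ᵀ * X)).trace := by
    rw [← trace_transpose]
    simp [transpose_mul, Matrix.mul_assoc]
  have hquad : Bᵀ * 𝒳ᵀ * (𝒳 * B) = Bᵀ * B := by
    rw [Matrix.mul_assoc, ← Matrix.mul_assoc 𝒳ᵀ, h𝒳, Matrix.one_mul]
  simp only [transpose_sub, transpose_mul, Matrix.sub_mul, Matrix.mul_sub, trace_sub, hX,
    trace_one, hcross, hquad, Matrix.mul_assoc]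
  ring

lemma trace_cfc_eq_sum_eigenvalues {𝕜 : Type*} [RCLike 𝕜] {A : Matrix k k 𝕜}
    (hA : A.IsHermitian) (f : ℝ → ℝ) : (cfc f A).trace = ∑ i, (f (hA.eigenvalues i) : 𝕜) := by
  rw [hA.cfc_eq, IsHermitian.cfc, Unitary.conjStarAlgAut_apply, trace_mul_cycle,
    Unitary.coe_star_mul_self, Matrix.one_mul, trace_diagonal]
  simp

lemma IsHermitian.eigenvalues_le_of_dotProduct_mulVec_le {A : Matrix k k ℝ} (hA : A.IsHermitian)
    {C : ℝ} (hC : ∀ v, v ⬝ᵥ (A *ᵥ v) ≤ C * (v ⬝ᵥ v)) (i : k) : hA.eigenvalues i ≤ C := by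
  have hunit : (hA.eigenvectorBasis i : k → ℝ) ⬝ᵥ hA.eigenvectorBasis i = 1 := by
    rw [dotProduct_self_eq_norm_toLp_sq]
    simp [hA.eigenvectorBasis.orthonormal.1 i]
  simpa [hA.eigenvalues_eq i, hunit] using hC (hA.eigenvectorBasis i)

lemma PosDef.cfc_inv_sqrt_mul_mul_cfc_inv_sqrt {H : Matrix k k ℝ} (hH : H.PosDef) :
    cfc (fun x => (√x)⁻¹) H * H * cfc (fun x => (√x)⁻¹) H = 1 := by
  have hcont : ∀ f : ℝ → ℝ, ContinuousOn f (spectrum ℝ H) :=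
    H.finite_real_spectrum.continuousOn
  calc cfc (fun x => (√x)⁻¹) H * H * cfc (fun x => (√x)⁻¹) H
      = cfc (fun x => (√x)⁻¹ * x * (√x)⁻¹) H := by
        rw [cfc_mul _ _ H (hcont _) (hcont _), cfc_mul _ _ H (hcont _) (hcont _),
          cfc_id' ℝ H hH.1.isSelfAdjoint]
    _ = 1 := by
      rw [cfc_congr (g := 1), cfc_one ℝ H hH.1.isSelfAdjoint]
      rw [hH.1.spectrum_real_eq_range_eigenvalues]
      rintro _ ⟨i, rfl⟩
      have hs := Real.sqrt_pos.mpr (hH.eigenvalues_pos i)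
      simp only [Pi.one_apply]
      field_simp
      exact (Real.sq_sqrt (hH.eigenvalues_pos i).le).symm

theorem exists_orthogonal_trace_transpose_mul_self_le (S : Matrix k k ℝ)
    (hS : Function.Injective S.mulVec) (hcontr : ∀ c, (S *ᵥ c) ⬝ᵥ (S *ᵥ c) ≤ c ⬝ᵥ c) :
    ∃ O : Matrix k k ℝ, Oᵀ * O = 1 ∧ (Sᵀ * S).trace ≤ (Oᵀ * S).trace := by
  set H := Sᵀ * S
  have hH : H.PosDef := by simpa using PosDef.conjTranspose_mul_self S hS
  have hle : ∀ i, hH.1.eigenvalues i ≤ 1 :=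
    hH.1.eigenvalues_le_of_dotProduct_mulVec_le fun v => by
      simpa [H, ← mulVec_mulVec, dotProduct_mulVec, ← mulVec_transpose] using hcontr v
  set g : ℝ → ℝ := fun x => (√x)⁻¹
  set G := cfc g H
  have hGt : Gᵀ = G := by
    simpa [IsSelfAdjoint, star_eq_conjTranspose] using (cfc_predicate g H : IsSelfAdjoint G)
  have hGH : G * H = cfc (fun x => g x * x) H := by
    rw [cfc_mul g (fun x => x) H (H.finite_real_spectrum.continuousOn _)
      (H.finite_real_spectrum.continuousOn _), cfc_id' ℝ H hH.1.isSelfAdjoint]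
  refine ⟨S * G, ?_, ?_⟩
  · rw [transpose_mul, hGt, Matrix.mul_assoc, ← Matrix.mul_assoc Sᵀ, ← Matrix.mul_assoc]
    exact hH.cfc_inv_sqrt_mul_mul_cfc_inv_sqrt
  · calc H.trace = (cfc (fun x => x) H).trace := by rw [cfc_id' ℝ H hH.1.isSelfAdjoint]
      _ = ∑ i, hH.1.eigenvalues i := by simpa using trace_cfc_eq_sum_eigenvalues hH.1 _
      _ ≤ ∑ i, g (hH.1.eigenvalues i) * hH.1.eigenvalues i := by
          refine Finset.sum_le_sum fun i _ => ?_
          have hd := hH.eigenvalues_pos i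
          exact le_mul_of_one_le_left hd.le
            ((one_le_inv₀ (Real.sqrt_pos.mpr hd)).mpr (Real.sqrt_le_one.mpr (hle i)))
      _ = (cfc (fun x => g x * x) H).trace := by
          simpa using (trace_cfc_eq_sum_eigenvalues hH.1 (fun x => g x * x)).symm
      _ = ((S * G)ᵀ * S).trace := by
          rw [← hGH]
          simp only [transpose_mul, hGt, H, Matrix.mul_assoc]

theorem exists_orthogonal_trace_sub_mul_le {X 𝒳 : Matrix n k ℝ} (hX : Xᵀ * X = 1)
    (h𝒳 : 𝒳ᵀ * 𝒳 = 1) (hS : Function.Injective (𝒳ᵀ * X).mulVec) :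
    ∃ O : Matrix k k ℝ, Oᵀ * O = 1 ∧ O * Oᵀ = 1 ∧
      ((X - 𝒳 * O)ᵀ * (X - 𝒳 * O)).trace
        ≤ 2 * ((X - 𝒳 * (𝒳ᵀ * X))ᵀ * (X - 𝒳 * (𝒳ᵀ * X))).trace := by
  have hcontr (c : k → ℝ) : ((𝒳ᵀ * X) *ᵥ c) ⬝ᵥ ((𝒳ᵀ * X) *ᵥ c) ≤ c ⬝ᵥ c := by
    have := dotProduct_self_transpose_mul_mulVec_add hX h𝒳 c
    have := dotProduct_self_nonneg ((X - 𝒳 * (𝒳ᵀ * X)) *ᵥ c)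
    linarith
  obtain ⟨O, hO, htrace⟩ := exists_orthogonal_trace_transpose_mul_self_le _ hS hcontr
  refine ⟨O, hO, mul_eq_one_comm.mp hO, ?_⟩
  rw [trace_transpose_mul_self_sub_mul hX h𝒳, trace_transpose_mul_self_sub_mul hX h𝒳, hO,
    trace_one]
  linarith

end Matrix

lemma specNorm_nonneg {N : ℕ} (A : Matrix (Fin N) (Fin N) ℝ) : 0 ≤ specNorm A :=
  norm_nonneg _

section

open scoped Matrix.Norms.L2Operator

lemma mulVec_dotProduct_mulVec_le_specNorm_sq {N : ℕ} (A : Matrix (Fin N) (Fin N) ℝ)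
    (x : Fin N → ℝ) : (A *ᵥ x) ⬝ᵥ (A *ᵥ x) ≤ specNorm A ^ 2 * (x ⬝ᵥ x) := by
  rw [dotProduct_self_eq_norm_toLp_sq, dotProduct_self_eq_norm_toLp_sq, ← mul_pow]
  gcongr
  exact A.l2_opNorm_mulVec (WithLp.toLp 2 x)

lemma abs_dotProduct_mulVec_le_specNorm {N : ℕ} (A : Matrix (Fin N) (Fin N) ℝ)
    (x : Fin N → ℝ) : |x ⬝ᵥ (A *ᵥ x)| ≤ specNorm A * (x ⬝ᵥ x) := by
  have h := abs_real_inner_le_norm (WithLp.toLp 2 (A *ᵥ x)) (WithLp.toLp 2 x)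
  rw [EuclideanSpace.inner_toLp_toLp, star_trivial] at h
  refine h.trans ?_
  rw [dotProduct_self_eq_norm_toLp_sq, sq, ← mul_assoc]
  gcongr
  exact A.l2_opNorm_mulVec (WithLp.toLp 2 x)

end

lemma frobNorm_eq_sqrt_trace {m n : ℕ} (A : Matrix (Fin m) (Fin n) ℝ) :
    frobNorm A = √(Aᵀ * A).trace := by
  rw [frobNorm, trace, Finset.sum_comm]
  simp [mul_apply, sq]

lemma two_mul_mul_div_sub_sq_le {K lam ε : ℝ} (hK : 0 ≤ K) (hlam : 0 < lam) (hε : 0 ≤ ε)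
    (hclose : ε ≤ lam / 8) : 2 * (K * (ε / (lam - ε)) ^ 2) ≤ (8 * √(2 * K) / lam * ε) ^ 2 := by
  have hratio : ε / (lam - ε) ≤ 8 * ε / lam := by
    rw [div_le_div_iff₀ (by linarith) hlam]
    nlinarith
  calc 2 * (K * (ε / (lam - ε)) ^ 2) ≤ 2 * (K * (8 * ε / lam) ^ 2) := by
        have := div_nonneg hε (by linarith : 0 ≤ lam - ε)
        gcongr
    _ = (8 * √(2 * K) / lam * ε) ^ 2 := by
        rw [show (8 * √(2 * K) / lam * ε) ^ 2 = 64 * √(2 * K) ^ 2 * ε ^ 2 / lam ^ 2 by ring,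
          Real.sq_sqrt (by positivity)]
        ring

theorem davis_kahan_eigenvector_bound_general
    (N K : ℕ) (Lτ ℒτ : Matrix (Fin N) (Fin N) ℝ)
    (hL : Lτ.IsHermitian)
    (hrank : ℒτ.rank = K)
    (lamK : ℝ) (hlamK : 0 < lamK)
    -- eigenvectors of the K positive eigenvalues of ℒτ, each eigenvalue ≥ lamK
    (𝒳τ : Matrix (Fin N) (Fin K) ℝ) (h𝒳orth : 𝒳τᵀ * 𝒳τ = 1)
    (Λ : Fin K → ℝ) (hΛ : ∀ s, lamK ≤ Λ s)
    (h𝒳eig : ℒτ * 𝒳τ = 𝒳τ * Matrix.diagonal Λ)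
    -- orthonormal eigenvectors of the top K eigenvalues of Lτ
    (Xτ : Matrix (Fin N) (Fin K) ℝ) (hXorth : Xτᵀ * Xτ = 1)
    (W : Fin K → ℝ) (hXeig : Lτ * Xτ = Xτ * Matrix.diagonal W)
    (htop : ∀ v : Fin N → ℝ, (∀ s, (∑ i, v i * Xτ i s) = 0) →
      v ⬝ᵥ Lτ.mulVec v ≤ (⨅ s, W s) * (v ⬝ᵥ v))
    (hclose : specNorm (Lτ - ℒτ) ≤ lamK / 8) :
    ∃ 𝒪 : Matrix (Fin K) (Fin K) ℝ, 𝒪ᵀ * 𝒪 = 1 ∧ 𝒪 * 𝒪ᵀ = 1 ∧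
      frobNorm (Xτ - 𝒳τ * 𝒪) ≤ (8 * Real.sqrt (2 * K) / lamK) * specNorm (Lτ - ℒτ) := by
  set ε := specNorm (Lτ - ℒτ)
  have hε : 0 ≤ ε := specNorm_nonneg _
  have hδpos : 0 < lamK - ε := by linarith
  have hW : ∀ s, lamK - ε ≤ W s :=
    sub_le_of_abs_dotProduct_sub_mulVec_le (isHermitian_iff_isSymm.mp hL) h𝒳orth hΛ h𝒳eig
      hXorth hXeig htop (abs_dotProduct_mulVec_le_specNorm _)
  have hPℒ : 𝒳τ * 𝒳τᵀ * ℒτ = ℒτ := mul_transpose_mul_eq_self_of_rank_eq h𝒳orth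
    (fun t => (hlamK.trans_le (hΛ t)).ne') h𝒳eig (by simpa using hrank)
  have hsin := mulVec_sub_mul_transpose_mul_le hXorth h𝒳orth hPℒ hXeig hδpos hW
    (mulVec_dotProduct_mulVec_le_specNorm_sq _)
  have hsin_lt_one : (ε / (lamK - ε)) ^ 2 < 1 := by
    rw [div_pow, div_lt_one (by positivity)]
    nlinarith
  obtain ⟨𝒪, h𝒪, h𝒪', hprocrustes⟩ := exists_orthogonal_trace_sub_mul_le hXorth h𝒳orth
    (injective_mulVec_transpose_mul hXorth h𝒳orth hsin_lt_one hsin)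
  refine ⟨𝒪, h𝒪, h𝒪', ?_⟩
  rw [frobNorm_eq_sqrt_trace, Real.sqrt_le_left (by positivity)]
  calc ((Xτ - 𝒳τ * 𝒪)ᵀ * (Xτ - 𝒳τ * 𝒪)).trace ≤ 2 * (K * (ε / (lamK - ε)) ^ 2) := by
        refine hprocrustes.trans ?_
        gcongr
        simpa using trace_transpose_mul_self_le _ hsin
    _ ≤ (8 * √(2 * K) / lamK * ε) ^ 2 := two_mul_mul_div_sub_sq_le K.cast_nonneg hlamK hε hclose

/-- Davis–Kahan-type eigenvector perturbation bound.  𝒳τ contains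
orthonormal eigenvectors of the K positive eigenvalues of the rank-K matrix ℒτ (all at
least λ_K), Xτ contains orthonormal eigenvectors of the top-K eigenvalues W of Lτ
(every direction orthogonal to the columns of Xτ has Rayleigh quotient at most min W). -/
theorem davis_kahan_eigenvector_bound
    (N K : ℕ) (Lτ ℒτ : Matrix (Fin N) (Fin N) ℝ)
    (hL : Lτ.IsHermitian) (hℒ : ℒτ.IsHermitian)
    (hrank : ℒτ.rank = K)
    (lamK : ℝ) (hlamK : 0 < lamK)
    -- eigenvectors of the K positive eigenvalues of ℒτ, each eigenvalue ≥ lamK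
    (𝒳τ : Matrix (Fin N) (Fin K) ℝ) (h𝒳orth : 𝒳τᵀ * 𝒳τ = 1)
    (Λ : Fin K → ℝ) (hΛ : ∀ s, lamK ≤ Λ s)
    (h𝒳eig : ℒτ * 𝒳τ = 𝒳τ * Matrix.diagonal Λ)
    -- orthonormal eigenvectors of the top K eigenvalues of Lτ
    (Xτ : Matrix (Fin N) (Fin K) ℝ) (hXorth : Xτᵀ * Xτ = 1)
    (W : Fin K → ℝ) (hXeig : Lτ * Xτ = Xτ * Matrix.diagonal W)
    (htop : ∀ v : Fin N → ℝ, (∀ s, (∑ i, v i * Xτ i s) = 0) →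
      v ⬝ᵥ Lτ.mulVec v ≤ (⨅ s, W s) * (v ⬝ᵥ v))
    (hclose : specNorm (Lτ - ℒτ) ≤ lamK / 8) :
    ∃ 𝒪 : Matrix (Fin K) (Fin K) ℝ, 𝒪ᵀ * 𝒪 = 1 ∧ 𝒪 * 𝒪ᵀ = 1 ∧
      frobNorm (Xτ - 𝒳τ * 𝒪) ≤ (8 * Real.sqrt (2 * K) / lamK) * specNorm (Lτ - ℒτ) :=
  davis_kahan_eigenvector_bound_general N K Lτ ℒτ hL hrank lamK hlamK 𝒳τ h𝒳orth Λ hΛ h𝒳eig Xτ hXorth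
    W hXeig htop hclose
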